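/- Let V = (F_2)^n = V₁ ⊕ ⋯ ⊕ V_b with bricks of dimension s, and let ρ₁, …, ρ_r be permutations of V with 0ρᵢ = 0 and ρᵢ = γᵢλᵢ, where each γᵢ is a parallel S-box whose S-boxes are 2^δ-differentially uniform (δ < s) and strongly (δ−1)-anti-invariant, and each λᵢ is a linear strongly-proper diffusion layer (no wall W, W′ satisfies Wλᵢ = W′). Suppose there exist non-trivial proper subgroups 𝒰ᵢ ≤ V × V (1 ≤ i ≤ r+1) such that the Feistel operator ρ̄ᵢ maps the coset partition 𝓛(𝒰ᵢ) onto 𝓛(𝒰_{i+1}) for each i. Then there is no index 1 ≤ i ≤ r−1 such that ρ̄_{i+1} maps 𝓛(𝒰_{i+1}) onto 𝓛(𝒰ᵢ). -/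

import Mathlib

/-- A brick `(𝔽₂)ˢ`. -/
abbrev Brick (s : ℕ) := Fin s → ZMod 2

/-- The space `V = V₁ ⊕ ⋯ ⊕ V_b` with `b` bricks of dimension `s`. -/
abbrev Vbs (b s : ℕ) := Fin b → Brick s

/-- The parallel S-box applying `γ j` to the `j`-th brick. -/
def parallel {b s : ℕ} (γ : ∀ _ : Fin b, Equiv.Perm (Brick s)) :
    Vbs b s → Vbs b s :=
  fun x j => γ j (x j)

/-- A wall: the direct sum of the bricks indexed by a proper non-empty subset. -/
def IsWall {b s : ℕ} (U : Submodule (ZMod 2) (Vbs b s)) : Prop :=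
  ∃ I : Set (Fin b), I.Nonempty ∧ I ≠ Set.univ ∧
    (U : Set (Vbs b s)) = {x | ∀ j ∉ I, x j = 0}

/-- `f` is `δ'`-differentially uniform: every nonzero input difference yields
each output difference at most `δ'` times. -/
def DiffUniform {s : ℕ} (f : Brick s → Brick s) (δ' : ℕ) : Prop :=
  ∀ a c : Brick s, a ≠ 0 → Nat.card {x : Brick s | f (x + a) + f x = c} ≤ δ'

/-- `f` is strongly `δ`-anti-invariant: whenever `f` maps a proper non-trivial
subspace `U` onto a proper non-trivial subspace `W`, then
`dim U = dim W < s - δ`. -/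
def StronglyAntiInvariant {s : ℕ} (f : Brick s → Brick s) (δ : ℕ) : Prop :=
  ∀ U W : Submodule (ZMod 2) (Brick s), U ≠ ⊥ → U ≠ ⊤ → W ≠ ⊥ → W ≠ ⊤ →
    f '' (U : Set (Brick s)) = (W : Set (Brick s)) →
    Module.finrank (ZMod 2) U = Module.finrank (ZMod 2) W ∧
      Module.finrank (ZMod 2) U < s - δ

/-- `f` maps the partition into cosets of `U` onto the partition into cosets
of `W`. -/
def MapsLinearPartition {α : Type*} [Add α] (f : α → α) (U W : Set α) : Prop :=
  (fun S => f '' S) '' (Set.range fun v => (fun x => x + v) '' U) =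
    Set.range fun w => (fun x => x + w) '' W

/-- The Feistel operator `(x₁, x₂) ↦ (x₂, x₁ + ρ x₂)` on `V × V`. -/
def feistel {b s : ℕ} (ρ : Equiv.Perm (Vbs b s)) :
    Vbs b s × Vbs b s → Vbs b s × Vbs b s :=
  fun x => (x.2, x.1 + ρ x.2)

/-!
Write `T(𝒰) = {t | (0, t) ∈ 𝒰}` (`AddSubgroup.vertical`). If `ρ̄` maps `𝓛(𝒰)` onto `𝓛(𝒲)` and
`ρ̄'` maps `𝓛(𝒲)` back onto `𝓛(𝒰)`, comparing Feistel images of vectors `(0, z)` shows that `ρ`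
maps `T(𝒰)` onto `T(𝒲)` and that its derivatives along `T(𝒰)` take values in `T(𝒲)`; the
non-constant derivatives of `ρ'` make `T(𝒰)` non-trivial, and `𝒲 ≠ V × V` makes it proper.
Peeling off `λ`, the parallel S-box then maps the cosets of `T(𝒰)` into cosets of `T(𝒲)λ⁻¹`. On
a single brick, differential uniformity bounds the number of values of a derivative from below
and strong anti-invariance bounds the size of a proper non-trivial image subspace from above, so
every section of `T(𝒰)` is trivial or the whole brick: `T(𝒰)` is a wall. Applied to both rounds
`i` and `i + 1`, this gives walls `T(𝒰ᵢ)` and `T(𝒰ᵢ₊₁)` with `T(𝒰ᵢ)λᵢ = T(𝒰ᵢ₊₁)`, contradicting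
strong properness.
-/

section Feistel

variable {M : Type*} [AddCommGroup M]

namespace MapsLinearPartition

variable {f : M → M} {U W : AddSubgroup M}

theorem exists_image_coset (h : MapsLinearPartition f U W) (z : M) :
    ∃ w, (· + w) '' (W : Set M) = f '' ((· + z) '' U) := by
  have : f '' ((· + z) '' U) ∈ (fun S => f '' S) '' Set.range fun v => (· + v) '' (U : Set M) :=
    ⟨_, ⟨z, rfl⟩, rfl⟩
  rwa [h] at this

theorem image_eq (h : MapsLinearPartition f U W) (hf : f 0 = 0) : f '' U = W := by
  obtain ⟨w, hw⟩ := h.exists_image_coset 0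
  simp only [add_zero, Set.image_id'] at hw
  obtain ⟨ω, hω, hωw⟩ : 0 ∈ (· + w) '' (W : Set M) := hw ▸ ⟨0, U.zero_mem, hf⟩
  have hwW : w ∈ W := by
    rw [← neg_eq_of_add_eq_zero_right hωw]
    exact W.neg_mem hω
  rw [← hw]
  ext y
  exact ⟨fun ⟨x, hx, hxy⟩ => hxy ▸ W.add_mem hx hwW,
    fun hy => ⟨y - w, W.sub_mem hy hwW, sub_add_cancel y w⟩⟩

theorem sub_mem (h : MapsLinearPartition f U W) {u : M} (hu : u ∈ U) (z : M) :
    f (z + u) - f z ∈ W := by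
  obtain ⟨w, hw⟩ := h.exists_image_coset z
  obtain ⟨ω₁, hω₁, he₁⟩ : f (z + u) ∈ (· + w) '' (W : Set M) :=
    hw ▸ ⟨z + u, ⟨u, hu, add_comm u z⟩, rfl⟩
  obtain ⟨ω₂, hω₂, he₂⟩ : f z ∈ (· + w) '' (W : Set M) :=
    hw ▸ ⟨z, ⟨0, U.zero_mem, zero_add z⟩, rfl⟩
  rw [← he₁, ← he₂, add_sub_add_right_eq_sub]
  exact W.sub_mem hω₁ hω₂

end MapsLinearPartition

def feistelMap (g : M → M) (x : M × M) : M × M := (x.2, x.1 + g x.2)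

def AddSubgroup.vertical (U : AddSubgroup (M × M)) : AddSubgroup M :=
  U.comap (AddMonoidHom.inr M M)

@[simp]
theorem AddSubgroup.mem_vertical {U : AddSubgroup (M × M)} {t : M} :
    t ∈ U.vertical ↔ (0, t) ∈ U := Iff.rfl

variable {g g' : M → M} {U W : AddSubgroup (M × M)}

theorem feistelMap_zero (hg : g 0 = 0) : feistelMap g 0 = 0 := by
  simp [feistelMap, hg]

theorem feistelMap_sub_mem (hf : MapsLinearPartition (feistelMap g) U W) {u : M × M}
    (hu : u ∈ U) (z : M) : (u.2, u.1 + (g (z + u.2) - g z)) ∈ W := by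
  have := hf.sub_mem hu (0, z)
  simpa [feistelMap, add_sub_assoc] using this

theorem mk_zero_mem_of_mem_vertical (hf' : MapsLinearPartition (feistelMap g') W U)
    (hg' : g' 0 = 0) {t : M} (ht : t ∈ U.vertical) : (t, 0) ∈ W := by
  have ht' : ((0 : M), t) ∈ feistelMap g' '' W := by
    rw [hf'.image_eq (feistelMap_zero hg')]
    exact ht
  obtain ⟨w, hw, he⟩ := ht'
  simp only [feistelMap, Prod.mk.injEq] at he
  obtain ⟨h2, h1⟩ := he
  rw [h2, hg', add_zero] at h1
  rwa [← h1, ← h2]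

theorem sub_mem_vertical (hf : MapsLinearPartition (feistelMap g) U W)
    (hf' : MapsLinearPartition (feistelMap g') W U) (hg' : g' 0 = 0) {t : M}
    (ht : t ∈ U.vertical) (z : M) : g (z + t) - g z ∈ W.vertical := by
  have := W.sub_mem (feistelMap_sub_mem hf ht z) (mk_zero_mem_of_mem_vertical hf' hg' ht)
  simpa using this

theorem image_vertical_subset (hf : MapsLinearPartition (feistelMap g) U W)
    (hf' : MapsLinearPartition (feistelMap g') W U) (hg : g 0 = 0) (hg' : g' 0 = 0) :
    g '' U.vertical ⊆ W.vertical := by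
  rintro _ ⟨t, ht, rfl⟩
  simpa [hg] using sub_mem_vertical hf hf' hg' ht 0

theorem image_vertical_eq [Finite M] (hf : MapsLinearPartition (feistelMap g) U W)
    (hf' : MapsLinearPartition (feistelMap g') W U) (hg : g 0 = 0) (hg' : g' 0 = 0)
    (hg_inj : g.Injective) (hg'_inj : g'.Injective) :
    g '' U.vertical = W.vertical := by
  refine Set.eq_of_subset_of_ncard_le (image_vertical_subset hf hf' hg hg') ?_ (Set.toFinite _)
  calc (W.vertical : Set M).ncard = (g' '' W.vertical).ncard :=
        (Set.ncard_image_of_injective _ hg'_inj).symm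
    _ ≤ (U.vertical : Set M).ncard :=
        Set.ncard_le_ncard (image_vertical_subset hf' hf hg' hg) (Set.toFinite _)
    _ = (g '' U.vertical).ncard := (Set.ncard_image_of_injective _ hg_inj).symm

/-- The second differences of `g'` along `w₂` for `w ∈ W` lie in `U.vertical`; if it is trivial
these derivatives are constant, which forces `w₂ = 0`, and then `w₁ ∈ U.vertical` too. -/
theorem vertical_ne_bot (hf' : MapsLinearPartition (feistelMap g') W U) (hg' : g' 0 = 0)
    (hder : ∀ a ≠ 0, ∃ z z', g' (z + a) - g' z ≠ g' (z' + a) - g' z') (hW : W ≠ ⊥) :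
    U.vertical ≠ ⊥ := by
  intro hbot
  obtain ⟨w, hw, hw0⟩ := W.bot_or_exists_ne_zero.resolve_left hW
  have hw2 : w.2 = 0 := by
    by_contra hw2
    obtain ⟨z, z', hzz'⟩ := hder _ hw2
    have := U.sub_mem (feistelMap_sub_mem hf' hw z) (feistelMap_sub_mem hf' hw z')
    rw [Prod.mk_sub_mk, sub_self, add_sub_add_left_eq_sub, ← AddSubgroup.mem_vertical, hbot,
      AddSubgroup.mem_bot, sub_eq_zero] at this
    exact hzz' this
  have hw1 : w.1 ∈ U.vertical := by
    have : feistelMap g' w ∈ feistelMap g' '' W := ⟨w, hw, rfl⟩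
    rw [hf'.image_eq (feistelMap_zero hg')] at this
    simpa [feistelMap, hw2, hg'] using this
  rw [hbot, AddSubgroup.mem_bot] at hw1
  exact hw0 (Prod.ext hw1 hw2)

theorem vertical_ne_top (hf : MapsLinearPartition (feistelMap g) U W) (hg : g 0 = 0)
    (hg_surj : g.Surjective) (himage : g '' U.vertical = W.vertical) (hW : W ≠ ⊤) :
    U.vertical ≠ ⊤ := by
  intro htop
  apply hW
  rw [htop, AddSubgroup.coe_top, Set.image_univ, hg_surj.range_eq] at himage
  rw [eq_top_iff]
  rintro z -
  have h1 : (z.1, g z.1) ∈ W := by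
    rw [← SetLike.mem_coe, ← hf.image_eq (feistelMap_zero hg)]
    exact ⟨(0, z.1), (htop ▸ AddSubgroup.mem_top z.1 : z.1 ∈ U.vertical), by simp [feistelMap]⟩
  have h2 : ((0 : M), z.2 - g z.1) ∈ W := by
    simpa using (himage ▸ Set.mem_univ _ : z.2 - g z.1 ∈ (W.vertical : Set M))
  simpa using W.add_mem h1 h2

end Feistel

section SBox

variable {s δ : ℕ} {g : Brick s → Brick s}

theorem DiffUniform.two_pow_le_ncard_range (h : DiffUniform g (2 ^ δ)) (hδ : δ ≤ s)
    {a : Brick s} (ha : a ≠ 0) : 2 ^ (s - δ) ≤ (Set.range fun x => g (x + a) + g x).ncard := by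
  classical
  set F : Brick s → Brick s := fun x => g (x + a) + g x
  have hfiber : ∀ c ∈ Finset.univ.image F, (Finset.univ.filter (F · = c)).card ≤ 2 ^ δ :=
    fun c _ => by simpa [Nat.card_eq_fintype_card, Fintype.card_subtype] using h a c ha
  have hcard := Finset.card_le_mul_card_image Finset.univ (2 ^ δ) hfiber
  rw [Finset.card_univ, Fintype.card_pi, Finset.prod_const, ZMod.card, Finset.card_univ,
    Fintype.card_fin, ← Nat.pow_sub_mul_pow 2 hδ, mul_comm] at hcard
  rw [← Set.image_univ, ← Finset.coe_univ, ← Finset.coe_image, Set.ncard_coe_finset]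
  exact Nat.le_of_mul_le_mul_left hcard (by positivity)

theorem DiffUniform.exists_add_ne (h : DiffUniform g (2 ^ δ)) (hδ : δ < s) {a : Brick s}
    (ha : a ≠ 0) : ∃ x x', g (x + a) + g x ≠ g (x' + a) + g x' := by
  by_contra! hconst
  have hsub : (Set.range fun x => g (x + a) + g x) ⊆ {g (0 + a) + g 0} := by
    rintro _ ⟨x, rfl⟩
    exact hconst x 0
  have h1 := (Set.ncard_le_ncard hsub).trans_eq (Set.ncard_singleton _)
  have h2 : 2 ≤ 2 ^ (s - δ) := Nat.le_self_pow (by omega) 2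
  have := h.two_pow_le_ncard_range hδ.le ha
  omega

theorem AddSubgroup.ncard_eq_two_pow_finrank (Q : AddSubgroup (Brick s)) :
    (Q : Set (Brick s)).ncard = 2 ^ Module.finrank (ZMod 2) (Q.toZModSubmodule 2) := by
  have := Module.natCard_eq_pow_finrank (K := ZMod 2) (V := Q.toZModSubmodule 2)
  rw [Nat.card_zmod] at this
  rw [← this, ← Nat.card_coe_set_eq]
  rfl

/-- The derivative of `g` in a direction `q ∈ R` takes values in `Q`, and by differential
uniformity it takes at least `2 ^ (s - δ)` values; anti-invariance caps `|Q|` at that number, so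
the derivative hits `0`, contradicting injectivity. -/
theorem StronglyAntiInvariant.eq_bot_or_eq_top {g : Equiv.Perm (Brick s)}
    (hai : StronglyAntiInvariant g (δ - 1)) (hdu : DiffUniform g (2 ^ δ)) (hδ : δ ≤ s)
    {R Q : AddSubgroup (Brick s)} (himage : g '' R = Q)
    (hder : ∀ q ∈ R, ∀ x, g (x + q) - g x ∈ Q) : R = ⊥ ∨ R = ⊤ := by
  rw [or_iff_not_and_not]
  rintro ⟨hR_bot, hR_top⟩
  obtain ⟨q, hq, hq0⟩ := R.bot_or_exists_ne_zero.resolve_left hR_bot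
  have hQ_bot : Q ≠ ⊥ := by
    intro hQ
    have := hder q hq 0
    rw [hQ, AddSubgroup.mem_bot, sub_eq_zero, zero_add] at this
    exact hq0 (g.injective this)
  have hQ_top : Q ≠ ⊤ := by
    obtain ⟨x, hx⟩ : ∃ x, x ∉ R := by
      by_contra! h
      exact hR_top (eq_top_iff.mpr fun x _ => h x)
    intro hQ
    obtain ⟨r, hr, hrx⟩ : g x ∈ g '' R := himage ▸ (hQ ▸ AddSubgroup.mem_top (g x) : g x ∈ Q)
    exact hx (g.injective hrx ▸ hr)
  obtain ⟨hdim, hlt⟩ := hai (R.toZModSubmodule 2) (Q.toZModSubmodule 2) (by simpa using hR_bot)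
    (by simpa using hR_top) (by simpa using hQ_bot) (by simpa using hQ_top) (by simpa using himage)
  have hcardQ : (Q : Set (Brick s)).ncard ≤ 2 ^ (s - δ) := by
    rw [Q.ncard_eq_two_pow_finrank]
    exact Nat.pow_le_pow_right (by norm_num) (by omega)
  have hsub : (Set.range fun x => g (x + q) + g x) ⊆ Q := by
    rintro _ ⟨x, rfl⟩
    simpa [ZModModule.sub_eq_add] using hder q hq x
  have hrange := Set.eq_of_subset_of_ncard_le hsub
    (hcardQ.trans (hdu.two_pow_le_ncard_range hδ hq0)) (Set.toFinite _)
  obtain ⟨x, hx⟩ : (0 : Brick s) ∈ Set.range fun x => g (x + q) + g x := hrange ▸ Q.zero_mem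
  dsimp only at hx
  rw [← ZModModule.sub_eq_add, sub_eq_zero] at hx
  exact hq0 (add_eq_left.mp (g.injective hx))

end SBox

theorem AddSubgroup.coe_eq_of_forall_single_mem {ι : Type*} [Fintype ι] [DecidableEq ι]
    {A : ι → Type*} [∀ i, AddCommGroup (A i)] (T : AddSubgroup (∀ i, A i))
    (h : ∀ j, (∃ t ∈ T, t j ≠ 0) → ∀ v, Pi.single j v ∈ T) :
    (T : Set (∀ i, A i)) = {x | ∀ j ∉ {j | ∃ t ∈ T, t j ≠ 0}, x j = 0} := by
  ext x
  refine ⟨fun hx j hj => by_contra fun hxj => hj ⟨x, hx, hxj⟩, fun hx => ?_⟩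
  rw [SetLike.mem_coe, ← Finset.univ_sum_single x]
  refine T.sum_mem fun j _ => ?_
  by_cases hj : ∃ t ∈ T, t j ≠ 0
  · exact h j hj _
  · rw [hx j hj, Pi.single_zero]
    exact T.zero_mem

section Parallel

variable {b s δ : ℕ} (γ : Fin b → Equiv.Perm (Brick s))

theorem parallel_injective : (parallel γ).Injective :=
  fun _ _ h => funext fun j => (γ j).injective (congrFun h j)

variable {γ}

theorem parallel_zero (h0 : ∀ j, γ j 0 = 0) : parallel γ 0 = 0 :=
  funext h0

theorem parallel_single (h0 : ∀ j, γ j 0 = 0) (j : Fin b) (v : Brick s) :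
    parallel γ (Pi.single j v) = Pi.single j (γ j v) := by
  funext k
  rcases eq_or_ne k j with rfl | hk
  · simp [parallel]
  · simp [parallel, hk, h0]

theorem parallel_image_of_isWall (h0 : ∀ j, γ j 0 = 0) {W : Submodule (ZMod 2) (Vbs b s)}
    (hW : IsWall W) : parallel γ '' W = W := by
  obtain ⟨I, -, -, hI⟩ := hW
  rw [hI]
  ext y
  refine ⟨?_, fun hy => ⟨fun j => (γ j).symm (y j), fun j hj => ?_, funext fun j => by
    simp [parallel]⟩⟩
  · rintro ⟨x, hx, rfl⟩ j hj
    simp [parallel, hx j hj, h0]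
  · simp [hy j hj, Equiv.symm_apply_eq, h0]

theorem exists_parallel_sub_ne (hδ : δ < s) (hdu : ∀ j, DiffUniform (γ j) (2 ^ δ))
    {a : Vbs b s} (ha : a ≠ 0) :
    ∃ z z', parallel γ (z + a) - parallel γ z ≠ parallel γ (z' + a) - parallel γ z' := by
  obtain ⟨j, hj⟩ := Function.ne_iff.mp ha
  obtain ⟨x, x', hxx'⟩ := (hdu j).exists_add_ne hδ hj
  refine ⟨Pi.single j x, Pi.single j x', fun h => hxx' ?_⟩
  simpa [parallel, ZModModule.sub_eq_add] using congrFun h j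

def brickSection (j : Fin b) (T : AddSubgroup (Vbs b s)) : AddSubgroup (Brick s) :=
  T.comap (AddMonoidHom.single (fun _ => Brick s) j)

@[simp]
theorem mem_brickSection {j : Fin b} {T : AddSubgroup (Vbs b s)} {v : Brick s} :
    v ∈ brickSection j T ↔ Pi.single j v ∈ T := Iff.rfl

variable {T P : AddSubgroup (Vbs b s)}

theorem image_brickSection_eq (h0 : ∀ j, γ j 0 = 0) (himage : parallel γ '' T = P) (j : Fin b) :
    γ j '' (brickSection j T) = brickSection j P := by
  ext v
  constructor
  · rintro ⟨q, hq, rfl⟩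
    rw [SetLike.mem_coe, mem_brickSection, ← parallel_single h0, ← SetLike.mem_coe, ← himage]
    exact ⟨_, mem_brickSection.mp hq, rfl⟩
  · intro hv
    obtain ⟨t, ht, hte⟩ : Pi.single j v ∈ parallel γ '' T := himage ▸ mem_brickSection.mp hv
    have : t = Pi.single j ((γ j).symm v) :=
      parallel_injective γ (by rw [hte, parallel_single h0, Equiv.apply_symm_apply])
    exact ⟨(γ j).symm v, by simpa [← this] using ht, Equiv.apply_symm_apply _ _⟩

theorem sub_mem_brickSection (h0 : ∀ j, γ j 0 = 0)
    (hder : ∀ t ∈ T, ∀ z, parallel γ (z + t) - parallel γ z ∈ P) (j : Fin b) {q : Brick s}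
    (hq : q ∈ brickSection j T) (x : Brick s) :
    γ j (x + q) - γ j x ∈ brickSection j P := by
  have := hder _ (mem_brickSection.mp hq) (Pi.single j x)
  rwa [← Pi.single_add, parallel_single h0, parallel_single h0,
    ← Pi.single_sub] at this

/-- The second difference of `parallel γ` between `z = single j x` and `z' = single j x'` is
concentrated on the `j`-th brick, where it is nonzero for suitable `x, x'`. -/
theorem brickSection_ne_bot (hδ : δ < s) (hdu : ∀ j, DiffUniform (γ j) (2 ^ δ))
    (h0 : ∀ j, γ j 0 = 0) (himage : parallel γ '' T = P)
    (hder : ∀ t ∈ T, ∀ z, parallel γ (z + t) - parallel γ z ∈ P) {t : Vbs b s} (ht : t ∈ T)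
    {j : Fin b} (htj : t j ≠ 0) : brickSection j T ≠ ⊥ := by
  obtain ⟨x, x', hxx'⟩ := (hdu j).exists_add_ne hδ htj
  set z : Vbs b s := Pi.single j x
  set z' : Vbs b s := Pi.single j x'
  have hsecond : (parallel γ (z + t) - parallel γ z) - (parallel γ (z' + t) - parallel γ z')
      = Pi.single j ((γ j (x + t j) - γ j x) - (γ j (x' + t j) - γ j x')) := by
    funext k
    rcases eq_or_ne k j with rfl | hk
    · simp [z, z', parallel]
    · simp [z, z', parallel, hk]
  have hmem := P.sub_mem (hder t ht z) (hder t ht z')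
  rw [hsecond, ← mem_brickSection, ← SetLike.mem_coe,
    ← image_brickSection_eq h0 himage] at hmem
  intro hbot
  rw [hbot, AddSubgroup.coe_bot, Set.image_singleton, Set.mem_singleton_iff, h0,
    sub_eq_zero, ZModModule.sub_eq_add, ZModModule.sub_eq_add] at hmem
  exact hxx' hmem

/-- `T` contains every brick it touches, because its section at such a brick is non-trivial and
hence, by anti-invariance, the whole brick. -/
theorem isWall_toZModSubmodule (hδ : δ < s) (hdu : ∀ j, DiffUniform (γ j) (2 ^ δ))
    (hai : ∀ j, StronglyAntiInvariant (γ j) (δ - 1)) (h0 : ∀ j, γ j 0 = 0)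
    (hT_bot : T ≠ ⊥) (hT_top : T ≠ ⊤) (himage : parallel γ '' T = P)
    (hder : ∀ t ∈ T, ∀ z, parallel γ (z + t) - parallel γ z ∈ P) :
    IsWall (T.toZModSubmodule 2) := by
  have hsingle : ∀ j, (∃ t ∈ T, t j ≠ 0) → ∀ v, Pi.single j v ∈ T := by
    rintro j ⟨t, ht, htj⟩ v
    have htop := ((hai j).eq_bot_or_eq_top (hdu j) hδ.le (image_brickSection_eq h0 himage j)
      fun _ => sub_mem_brickSection h0 hder j).resolve_left
      (brickSection_ne_bot hδ hdu h0 himage hder ht htj)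
    have hv : v ∈ brickSection j T := htop ▸ AddSubgroup.mem_top v
    simpa using hv
  have hT := T.coe_eq_of_forall_single_mem hsingle
  refine ⟨_, ?_, fun huniv => hT_top ?_, hT⟩
  · obtain ⟨t, ht, ht0⟩ := T.bot_or_exists_ne_zero.resolve_left hT_bot
    obtain ⟨j, hj⟩ := Function.ne_iff.mp ht0
    exact ⟨j, t, ht, hj⟩
  · rw [huniv] at hT
    simpa using hT

theorem isWall_vertical {b s δ : ℕ} (hδ : δ < s) {γ γ' : Fin b → Equiv.Perm (Brick s)}
    {lm lm' : Vbs b s ≃ₗ[ZMod 2] Vbs b s} {ρ ρ' : Equiv.Perm (Vbs b s)}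
    (hρ : ⇑ρ = lm ∘ parallel γ) (hρ' : ⇑ρ' = lm' ∘ parallel γ')
    (h0 : ∀ j, γ j 0 = 0) (h0' : ∀ j, γ' j 0 = 0) (hdu : ∀ j, DiffUniform (γ j) (2 ^ δ))
    (hdu' : ∀ j, DiffUniform (γ' j) (2 ^ δ)) (hai : ∀ j, StronglyAntiInvariant (γ j) (δ - 1))
    {U W : AddSubgroup (Vbs b s × Vbs b s)} (hW_bot : W ≠ ⊥) (hW_top : W ≠ ⊤)
    (hf : MapsLinearPartition (feistel ρ) U W) (hf' : MapsLinearPartition (feistel ρ') W U) :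
    IsWall (U.vertical.toZModSubmodule 2) ∧ lm '' U.vertical = W.vertical := by
  have hρ0 : ρ 0 = 0 := by simp [hρ, parallel_zero h0]
  have hρ'0 : ρ' 0 = 0 := by simp [hρ', parallel_zero h0']
  have himage : ρ '' U.vertical = W.vertical :=
    image_vertical_eq hf hf' hρ0 hρ'0 ρ.injective ρ'.injective
  have hρ'der : ∀ a ≠ 0, ∃ z z', ρ' (z + a) - ρ' z ≠ ρ' (z' + a) - ρ' z' := fun a ha => by
    obtain ⟨z, z', h⟩ := exists_parallel_sub_ne hδ hdu' ha
    exact ⟨z, z', by simpa [hρ', ← map_sub] using lm'.injective.ne h⟩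
  have hparallel_image : parallel γ '' U.vertical = lm ⁻¹' W.vertical := by
    rw [← himage, hρ, Set.image_comp, Set.preimage_image_eq _ lm.injective]
  have hwall := isWall_toZModSubmodule (P := W.vertical.comap lm.toLinearMap.toAddMonoidHom)
    hδ hdu hai h0 (vertical_ne_bot hf' hρ'0 hρ'der hW_bot)
    (vertical_ne_top hf hρ0 ρ.surjective himage hW_top) hparallel_image
    fun t ht z => by simpa [hρ] using sub_mem_vertical hf hf' hρ'0 ht z
  refine ⟨hwall, ?_⟩
  rw [← himage, hρ, Set.image_comp, ← AddSubgroup.coe_toZModSubmodule 2 U.vertical,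
    parallel_image_of_isWall h0 hwall]

/-- Consider an `r`-round Feistel network whose `i`-th generating function is
`ρᵢ = γᵢλᵢ` with `γᵢ` a parallel S-box whose S-boxes are `2^δ`-differentially
uniform and strongly `(δ-1)`-anti-invariant, and `λᵢ` a strongly-proper linear
diffusion layer. If there are non-trivial proper subgroups
`𝒰₁, …, 𝒰_{r+1} ≤ V × V` such that the `i`-th Feistel operator maps the coset
partition `𝓛(𝒰ᵢ)` onto `𝓛(𝒰_{i+1})`, then there is no `1 ≤ i ≤ r - 1` such
that the `(i+1)`-th Feistel operator maps `𝓛(𝒰_{i+1})` onto `𝓛(𝒰ᵢ)`. -/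
theorem stmt_19 (b s δ r : ℕ) (hδ : δ < s)
    (ρ : ℕ → Equiv.Perm (Vbs b s))
    (γ : ℕ → ∀ _ : Fin b, Equiv.Perm (Brick s))
    (lam : ℕ → (Vbs b s ≃ₗ[ZMod 2] Vbs b s))
    (hcomp : ∀ i, 1 ≤ i → i ≤ r → ∀ x, ρ i x = lam i (parallel (γ i) x))
    (h0 : ∀ i, 1 ≤ i → i ≤ r → ∀ j, γ i j 0 = 0)
    (hdu : ∀ i, 1 ≤ i → i ≤ r → ∀ j, DiffUniform (γ i j) (2 ^ δ))
    (hai : ∀ i, 1 ≤ i → i ≤ r → ∀ j, StronglyAntiInvariant (γ i j) (δ - 1))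
    (hlam : ∀ i, 1 ≤ i → i ≤ r → ∀ U W : Submodule (ZMod 2) (Vbs b s),
      IsWall U → IsWall W →
        (fun x => lam i x) '' (U : Set (Vbs b s)) ≠ (W : Set (Vbs b s)))
    (𝒰 : ℕ → AddSubgroup (Vbs b s × Vbs b s))
    (h𝒰 : ∀ i, 1 ≤ i → i ≤ r + 1 → 𝒰 i ≠ ⊥ ∧ 𝒰 i ≠ ⊤)
    (hmaps : ∀ i, 1 ≤ i → i ≤ r →
      MapsLinearPartition (feistel (ρ i))
        ((𝒰 i : Set (Vbs b s × Vbs b s))) ((𝒰 (i + 1) : Set (Vbs b s × Vbs b s)))) :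
    ¬ ∃ i, 1 ≤ i ∧ i ≤ r - 1 ∧
      MapsLinearPartition (feistel (ρ (i + 1)))
        ((𝒰 (i + 1) : Set (Vbs b s × Vbs b s))) ((𝒰 i : Set (Vbs b s × Vbs b s))) := by
  rintro ⟨i, hi, hir, hback⟩
  have hi' : i ≤ r := by omega
  have hi1 : i + 1 ≤ r := by omega
  have hρ : ∀ k, 1 ≤ k → k ≤ r → ⇑(ρ k) = lam k ∘ parallel (γ k) :=
    fun k hk hkr => funext (hcomp k hk hkr)
  obtain ⟨hU_bot, hU_top⟩ := h𝒰 i hi (by omega)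
  obtain ⟨hW_bot, hW_top⟩ := h𝒰 (i + 1) (by omega) (by omega)
  obtain ⟨hwallU, himage⟩ := isWall_vertical hδ (hρ i hi hi') (hρ (i + 1) (by omega) hi1)
    (h0 i hi hi') (h0 (i + 1) (by omega) hi1) (hdu i hi hi') (hdu (i + 1) (by omega) hi1)
    (hai i hi hi') hW_bot hW_top (hmaps i hi hi') hback
  obtain ⟨hwallW, -⟩ := isWall_vertical hδ (hρ (i + 1) (by omega) hi1) (hρ i hi hi')
    (h0 (i + 1) (by omega) hi1) (h0 i hi hi') (hdu (i + 1) (by omega) hi1) (hdu i hi hi')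
    (hai (i + 1) (by omega) hi1) hU_bot hU_top hback (hmaps i hi hi')
  exact hlam i hi hi' _ _ hwallU hwallW himage
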